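/- arXiv:1009.4600 — 2 statements merged into one kernel-verified Lean document; each statement's English description precedes it below -/
import Mathlib

section
/- Let A be an admissible partition of C^s and Ω = {Y₀, …, Y_t} a finite set of admissible partitions with A ≤ Y_i for all i. Then the greatest lower bound glb_A(Ω) exists. -/
namespace BrinThompson

/-- A finite binary word. -/
abbrev Word : Type := List Bool

/-- A box in `C^s`, recorded as the tuple of binary words whose cylinders form the product. -/
abbrev Box (s : ℕ) : Type := Fin s → Word

/-- The box obtained from `b` by replacing its `i`-th word `u` by `u ++ [bit]`. -/
def expandBox {s : ℕ} (i : Fin s) (bit : Bool) (b : Box s) : Box s :=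
  Function.update b i (b i ++ [bit])

/-- `B` is obtained from `A` by a simple expansion of colour `i`: one box of `A` is replaced by
its two halves in direction `i`. -/
def SimpleExpansionC {s : ℕ} (i : Fin s) (A B : Finset (Box s)) : Prop :=
  ∃ b ∈ A, B = insert (expandBox i false b) (insert (expandBox i true b) (A.erase b))

/-- `B` is obtained from `A` by a simple expansion of some colour. -/
def SimpleExpansion {s : ℕ} (A B : Finset (Box s)) : Prop :=
  ∃ i : Fin s, SimpleExpansionC i A B

/-- `Expands A B` (`A ≤ B`): `B` is a descendant of `A`, i.e. `B` is obtained from `A` by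
finitely many simple expansions. -/
def Expands {s : ℕ} (A B : Finset (Box s)) : Prop :=
  Relation.ReflTransGen SimpleExpansion A B

/-- The one-element partition `{C^s}`. -/
def trivialPartition (s : ℕ) : Finset (Box s) := {fun _ => []}

/-- An admissible partition of `C^s`. -/
def Admissible {s : ℕ} (A : Finset (Box s)) : Prop :=
  Expands (trivialPartition s) A

/-- `M = glb_A(Ω)`: the greatest lower bound of `Ω` above `A`. -/
def IsGlbAbove {s : ℕ} (A : Finset (Box s)) (Ω : Set (Finset (Box s)))
    (M : Finset (Box s)) : Prop :=
  Admissible M ∧ Expands A M ∧ (∀ B ∈ Ω, Expands M B) ∧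
    ∀ N : Finset (Box s), Admissible N → Expands A N → (∀ B ∈ Ω, Expands N B) → Expands N M

/-- The depth of a box: the total length of its defining words. -/
def depth {s : ℕ} (b : Box s) : ℕ := ∑ i, (b i).length

/-- `BoxLE m b`: the box `m` contains the box `b`, i.e. each word of `m` is a prefix of the
corresponding word of `b`. -/
def BoxLE {s : ℕ} (m b : Box s) : Prop := ∀ i, m i <+: b i

/-- A box `y ∈ Y` is locally maximal with respect to `A`: for the box `m` of `A` containing `y`,
every box `j ∈ Y` contained in `m` satisfies `l(A,j) ≤ l(A,y)`, i.e. `depth j ≤ depth y`. -/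
def LocallyMaximal {s : ℕ} (A Y : Finset (Box s)) (y : Box s) : Prop :=
  ∀ m ∈ A, BoxLE m y → ∀ j ∈ Y, BoxLE m j → depth j ≤ depth y

/-- There is an edge of colour `i` between `y, y' ∈ Y` in the graph `Γ_A`: some simple
contraction `Z` of `Y` of colour `i` with `A ≤ Z` merges exactly `y` and `y'`. -/
def GammaAdjC {s : ℕ} (A Y : Finset (Box s)) (i : Fin s) (y y' : Box s) : Prop :=
  y ≠ y' ∧ y ∈ Y ∧ y' ∈ Y ∧
    ∃ Z : Finset (Box s), Admissible Z ∧ SimpleExpansionC i Z Y ∧ Expands A Z ∧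
      Y \ Z = {y, y'}

/-- The graph `Γ_A` (with its colours forgotten). -/
def Gamma {s : ℕ} (A Y : Finset (Box s)) : SimpleGraph (Box s) where
  Adj y y' := ∃ i : Fin s, GammaAdjC A Y i y y'
  symm := by
    constructor
    rintro y y' ⟨i, hne, hy, hy', Z, h1, h2, h3, h4⟩
    exact ⟨i, hne.symm, hy', hy, Z, h1, h2, h3, by rwa [Finset.pair_comm]⟩
  loopless := by constructor; rintro y ⟨i, hne, _⟩; exact hne rfl

/-- The geometric realization of the order complex (nerve) of the relation `le` on `P`:
finitely supported probability densities on `P` whose support is a chain, topologised as a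
subspace of `P → ℝ`. -/
abbrev OrderComplex (P : Type*) (le : P → P → Prop) : Type _ :=
  {f : P → ℝ // (Function.support f).Finite ∧ (∀ x, 0 ≤ f x) ∧
    IsChain le (Function.support f) ∧ ∑ᶠ x, f x = 1}

/-- A space is `t`-connected if it is nonempty, path-connected and its homotopy groups
`π_k` vanish for `1 ≤ k ≤ t`. -/
def TConnected (t : ℕ) (X : Type*) [TopologicalSpace X] : Prop :=
  Nonempty X ∧ PathConnectedSpace X ∧
    ∀ k : ℕ, 1 ≤ k → k ≤ t → ∀ x : X, Subsingleton (HomotopyGroup (Fin k) X x)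

/-!
Among the admissible partitions `N` with `A ≤ N ≤ B` for all `B ∈ Ω` there are only finitely
many, since their words are prefixes of the words of one `B ∈ Ω`. The common refinement of two
admissible partitions `N` and `M` (the intersections of their overlapping boxes) is admissible and
expands both; and for admissible `B`, refining a partition is the same as expanding it, so the
common refinement lies below every `B` that lies above `N` and `M`. Hence a partition `M` of
maximal cardinality in this finite family absorbs every other member `N`: the common refinement
of `N` and `M` is in the family and expands `M`, so it equals `M`, and `N ≤ M`.
-/

section Boxes

variable {s : ℕ}

instance (m b : Box s) : Decidable (BoxLE m b) := Fintype.decidableForallFintype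

theorem boxLE_refl (b : Box s) : BoxLE b b := fun _ => List.prefix_refl _

theorem BoxLE.trans {a b c : Box s} (hab : BoxLE a b) (hbc : BoxLE b c) : BoxLE a c :=
  fun i => (hab i).trans (hbc i)

/-- The boxes `b` and `c` intersect exactly when their words are pairwise comparable. -/
def Overlap (b c : Box s) : Prop := ∀ i, b i <+: c i ∨ c i <+: b i

instance (b c : Box s) : Decidable (Overlap b c) := Fintype.decidableForallFintype

theorem Overlap.symm {b c : Box s} (h : Overlap b c) : Overlap c b := fun i => (h i).symm

theorem Overlap.mono {b c x y : Box s} (hbx : BoxLE b x) (hcy : BoxLE c y) (hxy : Overlap x y) :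
    Overlap b c := fun j => by
  rcases hxy j with h | h
  · exact List.prefix_or_prefix_of_prefix ((hbx j).trans h) (hcy j)
  · exact List.prefix_or_prefix_of_prefix (hbx j) ((hcy j).trans h)

theorem overlap_of_boxLE {b c x : Box s} (hb : BoxLE b x) (hc : BoxLE c x) : Overlap b c :=
  .mono hb hc fun _ => .inl (List.prefix_refl _)

/-- The intersection of `b` and `c`, when they overlap. -/
def boxInter (b c : Box s) : Box s :=
  fun j => if (b j).length ≤ (c j).length then c j else b j

theorem boxInter_apply_of_prefix {b c : Box s} {j : Fin s} (h : b j <+: c j) :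
    boxInter b c j = c j :=
  if_pos h.length_le

theorem boxInter_apply_of_prefix' {b c : Box s} {j : Fin s} (h : c j <+: b j) :
    boxInter b c j = b j := by
  unfold boxInter
  split_ifs with hlen
  · exact h.eq_of_length (le_antisymm h.length_le hlen)
  · rfl

theorem boxLE_boxInter_left {b c : Box s} (h : Overlap b c) : BoxLE b (boxInter b c) := fun j => by
  rcases h j with h' | h'
  · rw [boxInter_apply_of_prefix h']; exact h'
  · rw [boxInter_apply_of_prefix' h']

theorem boxLE_boxInter_right {b c : Box s} (h : Overlap b c) : BoxLE c (boxInter b c) := fun j => by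
  rcases h j with h' | h'
  · rw [boxInter_apply_of_prefix h']
  · rw [boxInter_apply_of_prefix' h']; exact h'

theorem boxInter_boxLE {b c x : Box s} (hb : BoxLE b x) (hc : BoxLE c x) :
    BoxLE (boxInter b c) x := fun j => by
  unfold boxInter
  split_ifs
  exacts [hc j, hb j]

theorem boxInter_comm {b c : Box s} (h : Overlap b c) : boxInter b c = boxInter c b := by
  funext j
  rcases h j with h' | h'
  · rw [boxInter_apply_of_prefix h', boxInter_apply_of_prefix' h']
  · rw [boxInter_apply_of_prefix' h', boxInter_apply_of_prefix h']

theorem boxInter_eq_right {b c : Box s} (h : BoxLE b c) : boxInter b c = c :=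
  funext fun j => boxInter_apply_of_prefix (h j)

theorem expandBox_self (i : Fin s) (c : Bool) (b : Box s) : expandBox i c b i = b i ++ [c] :=
  Function.update_self i _ b

theorem expandBox_of_ne {i j : Fin s} (h : j ≠ i) (c : Bool) (b : Box s) :
    expandBox i c b j = b j :=
  Function.update_of_ne h _ b

theorem boxLE_expandBox (i : Fin s) (c : Bool) (b : Box s) : BoxLE b (expandBox i c b) := by
  intro j
  rcases eq_or_ne j i with rfl | h
  · rw [expandBox_self]; exact List.prefix_append _ _
  · rw [expandBox_of_ne h]

theorem expandBox_ne (i : Fin s) (c : Bool) (b : Box s) : expandBox i c b ≠ b := fun h => by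
  simpa [expandBox_self] using congrArg List.length (congrFun h i)

theorem eq_of_overlap_expandBox {i : Fin s} {c d : Bool} {b : Box s}
    (h : Overlap (expandBox i c b) (expandBox i d b)) : c = d := by
  simpa [expandBox_self, eq_comm] using h i

theorem overlap_expandBox_iff {n m : Box s} {i : Fin s} {c : Bool} :
    Overlap n (expandBox i c m) ↔ Overlap n m ∧ (n i <+: m i ∨ m i ++ [c] <+: n i) := by
  constructor
  · intro h
    refine ⟨.mono (boxLE_refl n) (boxLE_expandBox i c m) h, ?_⟩
    rcases h i with h' | h'
    · rw [expandBox_self, List.prefix_concat_iff] at h'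
      rcases h' with h' | h'
      · exact .inr (h' ▸ List.prefix_refl _)
      · exact .inl h'
    · rw [expandBox_self] at h'
      exact .inr h'
  · rintro ⟨hnm, hi⟩ j
    rcases eq_or_ne j i with rfl | hj
    · rw [expandBox_self]
      exact hi.imp (·.trans (List.prefix_append _ _)) id
    · rw [expandBox_of_ne hj]
      exact hnm j

theorem boxInter_expandBox_of_prefix {n m : Box s} {i : Fin s} (c : Bool) (hi : n i <+: m i) :
    boxInter n (expandBox i c m) = expandBox i c (boxInter n m) := by
  funext j
  rcases eq_or_ne j i with rfl | hj
  · rw [boxInter_apply_of_prefix (by rw [expandBox_self]; exact hi.trans (List.prefix_append _ _)),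
      expandBox_self, expandBox_self, boxInter_apply_of_prefix hi]
  · simp only [boxInter, expandBox_of_ne hj]

theorem boxInter_expandBox_of_append_prefix {n m : Box s} {i : Fin s} {c : Bool}
    (hi : m i ++ [c] <+: n i) : boxInter n (expandBox i c m) = boxInter n m := by
  funext j
  rcases eq_or_ne j i with rfl | hj
  · rw [boxInter_apply_of_prefix' (by rwa [expandBox_self]),
      boxInter_apply_of_prefix' ((List.prefix_append _ _).trans hi)]
  · simp only [boxInter, expandBox_of_ne hj]

theorem exists_append_prefix_of_prefix {u v : Word} (h : u <+: v) (hne : u ≠ v) :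
    ∃ c, u ++ [c] <+: v := by
  obtain ⟨_ | ⟨c, w⟩, rfl⟩ := h
  · exact absurd (List.append_nil u).symm hne
  · exact ⟨c, by simp⟩

end Boxes

section Partitions

variable {s : ℕ}

def Nonoverlapping (P : Finset (Box s)) : Prop := ∀ b ∈ P, ∀ c ∈ P, Overlap b c → b = c

def Refines (B A : Finset (Box s)) : Prop := ∀ b ∈ B, ∃ a ∈ A, BoxLE a b

theorem mem_insert_expandBox_iff {i : Fin s} {b x : Box s} {S : Finset (Box s)} :
    x ∈ insert (expandBox i false b) (insert (expandBox i true b) S) ↔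
      (∃ c, x = expandBox i c b) ∨ x ∈ S := by
  simp [Bool.exists_bool, or_assoc]

theorem Nonoverlapping.expandBox_notMem {P : Finset (Box s)} (hP : Nonoverlapping P) {b : Box s}
    (hb : b ∈ P) (i : Fin s) (c : Bool) : expandBox i c b ∉ P := fun h =>
  expandBox_ne i c b (hP _ h b hb (overlap_of_boxLE (boxLE_refl _) (boxLE_expandBox i c b)))

theorem Nonoverlapping.simpleExpansion {A B : Finset (Box s)} (hA : Nonoverlapping A)
    (h : SimpleExpansion A B) : Nonoverlapping B := by
  obtain ⟨i, b, hb, rfl⟩ := h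
  have half_vs_rest : ∀ c, ∀ v ∈ A.erase b, ¬ Overlap (expandBox i c b) v := fun c v hv hov =>
    Finset.ne_of_mem_erase hv <| hA v (Finset.mem_of_mem_erase hv) b hb <|
      hov.symm.mono (boxLE_refl v) (boxLE_expandBox i c b)
  intro u hu v hv huv
  rw [mem_insert_expandBox_iff] at hu hv
  rcases hu with ⟨c, rfl⟩ | hu <;> rcases hv with ⟨d, rfl⟩ | hv
  · rw [eq_of_overlap_expandBox huv]
  · exact absurd huv (half_vs_rest c v hv)
  · exact absurd huv.symm (half_vs_rest d u hu)
  · exact hA u (Finset.mem_of_mem_erase hu) v (Finset.mem_of_mem_erase hv) huv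

theorem Nonoverlapping.expands {A B : Finset (Box s)} (hA : Nonoverlapping A) (h : Expands A B) :
    Nonoverlapping B := by
  induction h with
  | refl => exact hA
  | tail _ hstep ih => exact ih.simpleExpansion hstep

theorem nonoverlapping_trivialPartition (s : ℕ) : Nonoverlapping (trivialPartition s) := by
  simp [Nonoverlapping, trivialPartition]

theorem Admissible.nonoverlapping {A : Finset (Box s)} (h : Admissible A) : Nonoverlapping A :=
  (nonoverlapping_trivialPartition s).expands h

theorem card_of_simpleExpansion {A B : Finset (Box s)} (hA : Nonoverlapping A)
    (h : SimpleExpansion A B) : B.card = A.card + 1 := by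
  obtain ⟨i, b, hb, rfl⟩ := h
  have h1 : expandBox i true b ∉ A.erase b := fun h =>
    hA.expandBox_notMem hb i true (Finset.mem_of_mem_erase h)
  have h0 : expandBox i false b ∉ insert (expandBox i true b) (A.erase b) := by
    rw [Finset.mem_insert, not_or]
    exact ⟨fun h => Bool.false_ne_true (by simpa [expandBox_self] using congrFun h i),
      fun h => hA.expandBox_notMem hb i false (Finset.mem_of_mem_erase h)⟩
  rw [Finset.card_insert_of_notMem h0, Finset.card_insert_of_notMem h1,
    Finset.card_erase_add_one hb]

theorem Expands.eq_or_card_lt {A B : Finset (Box s)} (h : Expands A B) (hA : Nonoverlapping A) :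
    A = B ∨ A.card < B.card := by
  induction h with
  | refl => exact .inl rfl
  | tail hAB hstep ih =>
    have := card_of_simpleExpansion (hA.expands hAB) hstep
    right
    rcases ih with rfl | _ <;> omega

theorem Expands.exists_boxLE {A B : Finset (Box s)} (h : Expands A B) :
    ∀ a ∈ A, ∃ b ∈ B, BoxLE a b := by
  induction h with
  | refl => exact fun a ha => ⟨a, ha, boxLE_refl a⟩
  | tail _ hstep ih =>
    intro a ha
    obtain ⟨b, hb, hab⟩ := ih a ha
    obtain ⟨i, t, -, rfl⟩ := hstep
    by_cases hbt : b = t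
    · subst hbt
      exact ⟨expandBox i false b, by simp, hab.trans (boxLE_expandBox i false b)⟩
    · exact ⟨b, by simp [hbt, hb], hab⟩

theorem Expands.refines {A B : Finset (Box s)} (h : Expands A B) : Refines B A := by
  induction h with
  | refl => exact fun b hb => ⟨b, hb, boxLE_refl b⟩
  | tail _ hstep ih =>
    obtain ⟨i, t, ht, rfl⟩ := hstep
    intro b hb
    rcases mem_insert_expandBox_iff.mp hb with ⟨c, rfl⟩ | hb
    · obtain ⟨a, ha, hat⟩ := ih t ht
      exact ⟨a, ha, hat.trans (boxLE_expandBox i c t)⟩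
    · exact ih b (Finset.mem_of_mem_erase hb)

theorem finite_setOf_expands (B : Finset (Box s)) : {N | Expands N B}.Finite := by
  let W : Finset Word := B.biUnion fun b => Finset.univ.biUnion fun i => (b i).inits.toFinset
  refine (Fintype.piFinset fun _ : Fin s => W).powerset.finite_toSet.subset fun N hN => ?_
  rw [Finset.mem_coe, Finset.mem_powerset]
  intro n hn
  obtain ⟨b, hb, hnb⟩ := Expands.exists_boxLE hN n hn
  simp only [Fintype.mem_piFinset, W, Finset.mem_biUnion]
  exact fun i => ⟨b, hb, i, Finset.mem_univ i, by simpa using hnb i⟩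

def commonRefinement (N M : Finset (Box s)) : Finset (Box s) :=
  ((N ×ˢ M).filter fun p => Overlap p.1 p.2).image fun p => boxInter p.1 p.2

theorem mem_commonRefinement {N M : Finset (Box s)} {x : Box s} :
    x ∈ commonRefinement N M ↔ ∃ n ∈ N, ∃ m ∈ M, Overlap n m ∧ boxInter n m = x := by
  simp [commonRefinement, and_assoc]

theorem commonRefinement_comm (N M : Finset (Box s)) :
    commonRefinement N M = commonRefinement M N := by
  ext x
  simp only [mem_commonRefinement]
  constructor <;>
  · rintro ⟨n, hn, m, hm, hnm, rfl⟩
    exact ⟨m, hm, n, hn, hnm.symm, (boxInter_comm hnm).symm⟩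

theorem Nonoverlapping.commonRefinement {N M : Finset (Box s)} (hN : Nonoverlapping N)
    (hM : Nonoverlapping M) : Nonoverlapping (commonRefinement N M) := by
  intro x hx y hy hxy
  obtain ⟨n, hn, m, hm, hnm, rfl⟩ := mem_commonRefinement.mp hx
  obtain ⟨n', hn', m', hm', hnm', rfl⟩ := mem_commonRefinement.mp hy
  obtain rfl := hN n hn n' hn' (hxy.mono (boxLE_boxInter_left hnm) (boxLE_boxInter_left hnm'))
  obtain rfl := hM m hm m' hm' (hxy.mono (boxLE_boxInter_right hnm) (boxLE_boxInter_right hnm'))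
  rfl

theorem commonRefinement_eq_right {N M : Finset (Box s)} (hN : Nonoverlapping N)
    (h : Refines M N) : commonRefinement N M = M := by
  ext x
  rw [mem_commonRefinement]
  constructor
  · rintro ⟨n, hn, m, hm, hnm, rfl⟩
    obtain ⟨n', hn', hn'm⟩ := h m hm
    obtain rfl := hN n hn n' hn' <|
      overlap_of_boxLE (boxLE_boxInter_left hnm) (hn'm.trans (boxLE_boxInter_right hnm))
    rwa [boxInter_eq_right hn'm]
  · intro hx
    obtain ⟨n, hn, hnx⟩ := h x hx
    exact ⟨n, hn, x, hx, overlap_of_boxLE hnx (boxLE_refl x), boxInter_eq_right hnx⟩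

theorem commonRefinement_trivialPartition (N : Finset (Box s)) :
    commonRefinement N (trivialPartition s) = N := by
  rw [commonRefinement_comm]
  exact commonRefinement_eq_right (nonoverlapping_trivialPartition s) fun n _ =>
    ⟨_, Finset.mem_singleton_self _, fun _ => List.nil_prefix⟩

theorem Refines.commonRefinement {B N M : Finset (Box s)} (hN : Refines B N) (hM : Refines B M) :
    Refines B (commonRefinement N M) := by
  intro b hb
  obtain ⟨n, hn, hnb⟩ := hN b hb
  obtain ⟨m, hm, hmb⟩ := hM b hb
  have hnm := overlap_of_boxLE hnb hmb
  exact ⟨boxInter n m, mem_commonRefinement.mpr ⟨n, hn, m, hm, hnm, rfl⟩, boxInter_boxLE hnb hmb⟩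

end Partitions

section CommonRefinement

variable {s : ℕ}

def splitSet (i : Fin s) (T P : Finset (Box s)) : Finset (Box s) :=
  (P \ T) ∪ T.biUnion fun t => {expandBox i false t, expandBox i true t}

theorem expands_splitSet (i : Fin s) {P T : Finset (Box s)} (hP : Nonoverlapping P)
    (hTP : T ⊆ P) : Expands P (splitSet i T P) := by
  induction T using Finset.induction_on with
  | empty =>
    rw [splitSet, Finset.sdiff_empty, Finset.biUnion_empty, Finset.union_empty]
    exact .refl
  | insert t T ht ih =>
    have htP : t ∈ P := hTP (Finset.mem_insert_self t T)
    have ht_split : t ∈ splitSet i T P :=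
      Finset.mem_union_left _ (Finset.mem_sdiff.mpr ⟨htP, ht⟩)
    have ht_not_half : ∀ t' ∈ T, ∀ c, t ≠ expandBox i c t' := fun t' ht' c h =>
      hP.expandBox_notMem (hTP (Finset.mem_insert_of_mem ht')) i c (h ▸ htP)
    refine (ih ((Finset.subset_insert t T).trans hTP)).tail ⟨i, t, ht_split, ?_⟩
    ext x
    simp only [splitSet, Finset.mem_union, Finset.mem_sdiff,
      Finset.mem_biUnion, Finset.mem_erase, Finset.mem_insert, Finset.mem_singleton]
    grind

def uncutIn (i : Fin s) (m : Box s) (P : Finset (Box s)) : Finset (Box s) :=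
  P.filter fun x => BoxLE m x ∧ x i = m i

theorem commonRefinement_expandBox_subset {i : Fin s} {N M : Finset (Box s)} {m : Box s}
    (hM : Nonoverlapping M) (hm : m ∈ M) :
    commonRefinement N (insert (expandBox i false m) (insert (expandBox i true m) (M.erase m))) ⊆
      splitSet i (uncutIn i m (commonRefinement N M)) (commonRefinement N M) := by
  intro x hx
  obtain ⟨n, hn, m', hm', hnm', rfl⟩ := mem_commonRefinement.mp hx
  rcases mem_insert_expandBox_iff.mp hm' with ⟨c, rfl⟩ | hm'
  · obtain ⟨hnm, hi | hi⟩ := overlap_expandBox_iff.mp hnm'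
    · have hpiece : boxInter n m ∈ uncutIn i m (commonRefinement N M) :=
        Finset.mem_filter.mpr ⟨mem_commonRefinement.mpr ⟨n, hn, m, hm, hnm, rfl⟩,
          boxLE_boxInter_right hnm, boxInter_apply_of_prefix hi⟩
      rw [boxInter_expandBox_of_prefix c hi]
      exact Finset.mem_union_right _ (Finset.mem_biUnion.mpr ⟨_, hpiece, by cases c <;> simp⟩)
    · rw [boxInter_expandBox_of_append_prefix hi]
      refine Finset.mem_union_left _ (Finset.mem_sdiff.mpr
        ⟨mem_commonRefinement.mpr ⟨n, hn, m, hm, hnm, rfl⟩, fun h => ?_⟩)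
      have hlen := congrArg List.length (Finset.mem_filter.mp h).2.2
      rw [boxInter_apply_of_prefix' ((List.prefix_append _ _).trans hi)] at hlen
      simpa [hlen] using hi.length_le
  · obtain ⟨hm'm, hm'M⟩ := Finset.mem_erase.mp hm'
    refine Finset.mem_union_left _ (Finset.mem_sdiff.mpr
      ⟨mem_commonRefinement.mpr ⟨n, hn, m', hm'M, hnm', rfl⟩, fun h => hm'm ?_⟩)
    exact hM m' hm'M m hm <|
      overlap_of_boxLE (boxLE_boxInter_right hnm') (Finset.mem_filter.mp h).2.1

theorem splitSet_subset_commonRefinement_expandBox {i : Fin s} {N M : Finset (Box s)}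
    {m : Box s} (hM : Nonoverlapping M) (hm : m ∈ M) :
    splitSet i (uncutIn i m (commonRefinement N M)) (commonRefinement N M) ⊆
      commonRefinement N (insert (expandBox i false m) (insert (expandBox i true m) (M.erase m))) := by
  intro x hx
  rw [mem_commonRefinement]
  rcases Finset.mem_union.mp hx with hx | hx
  · obtain ⟨hxP, hx_cut⟩ := Finset.mem_sdiff.mp hx
    obtain ⟨n, hn, m', hm', hnm', rfl⟩ := mem_commonRefinement.mp hxP
    by_cases hm'm : m' = m
    · subst hm'm
      have hcut : boxInter n m' i ≠ m' i := fun h =>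
        hx_cut (Finset.mem_filter.mpr ⟨hxP, boxLE_boxInter_right hnm', h⟩)
      rcases hnm' i with hi | hi
      · exact absurd (boxInter_apply_of_prefix hi) hcut
      · rw [boxInter_apply_of_prefix' hi] at hcut
        obtain ⟨c, hc⟩ := exists_append_prefix_of_prefix hi (Ne.symm hcut)
        exact ⟨n, hn, expandBox i c m', mem_insert_expandBox_iff.mpr (.inl ⟨c, rfl⟩),
          overlap_expandBox_iff.mpr ⟨hnm', .inr hc⟩, boxInter_expandBox_of_append_prefix hc⟩
    · exact ⟨n, hn, m', mem_insert_expandBox_iff.mpr (.inr (Finset.mem_erase.mpr ⟨hm'm, hm'⟩)),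
        hnm', rfl⟩
  · obtain ⟨t, ht, hxt⟩ := Finset.mem_biUnion.mp hx
    obtain ⟨htP, hmt, hti⟩ := Finset.mem_filter.mp ht
    obtain ⟨n, hn, m', hm', hnm', rfl⟩ := mem_commonRefinement.mp htP
    obtain rfl := hM m' hm' m hm (overlap_of_boxLE (boxLE_boxInter_right hnm') hmt)
    have hi : n i <+: m' i := hti ▸ boxLE_boxInter_left hnm' i
    obtain ⟨c, rfl⟩ : ∃ c, x = expandBox i c (boxInter n m') := by
      simpa [Bool.exists_bool] using hxt
    exact ⟨n, hn, expandBox i c m', mem_insert_expandBox_iff.mpr (.inl ⟨c, rfl⟩),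
      overlap_expandBox_iff.mpr ⟨hnm', .inl hi⟩, boxInter_expandBox_of_prefix c hi⟩

/-- Cutting `m` in direction `i` cuts exactly those pieces `n ∩ m` of the common refinement whose
`i`-th word is still that of `m`; every other piece already lies in one half of `m`. -/
theorem expands_commonRefinement_of_simpleExpansion {N M₀ M : Finset (Box s)}
    (hN : Nonoverlapping N) (hM₀ : Nonoverlapping M₀) (h : SimpleExpansion M₀ M) :
    Expands (commonRefinement N M₀) (commonRefinement N M) := by
  obtain ⟨i, m, hm, rfl⟩ := h
  rw [(commonRefinement_expandBox_subset hM₀ hm).antisymm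
    (splitSet_subset_commonRefinement_expandBox hM₀ hm)]
  exact expands_splitSet i (hN.commonRefinement hM₀) (Finset.filter_subset _ _)

theorem expands_commonRefinement {N M : Finset (Box s)} (hN : Nonoverlapping N)
    (hM : Admissible M) : Expands N (commonRefinement N M) := by
  induction hM with
  | refl => rw [commonRefinement_trivialPartition]; exact .refl
  | tail hM₀ hstep ih =>
    exact ih.trans (expands_commonRefinement_of_simpleExpansion hN
      (nonoverlapping_trivialPartition s |>.expands hM₀) hstep)

theorem expands_of_refines {N M : Finset (Box s)} (hN : Nonoverlapping N) (hM : Admissible M)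
    (h : Refines M N) : Expands N M :=
  commonRefinement_eq_right hN h ▸ expands_commonRefinement hN hM

theorem expands_commonRefinement_of_expands {N M B : Finset (Box s)} (hN : Admissible N)
    (hM : Admissible M) (hB : Admissible B) (hNB : Expands N B) (hMB : Expands M B) :
    Expands (commonRefinement N M) B :=
  expands_of_refines (hN.nonoverlapping.commonRefinement hM.nonoverlapping) hB
    (hNB.refines.commonRefinement hMB.refines)

end CommonRefinement

theorem exists_isGlbAbove_general (s : ℕ)
    (A : Finset (Box s)) (hA : Admissible A)
    (Ω : Set (Finset (Box s))) (hne : Ω.Nonempty)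
    (hAΩ : ∀ B ∈ Ω, Expands A B) :
    ∃ M : Finset (Box s), IsGlbAbove A Ω M := by
  obtain ⟨B₀, hB₀⟩ := hne
  set S := {N | Admissible N ∧ Expands A N ∧ ∀ B ∈ Ω, Expands N B}
  have hS : S.Finite := (finite_setOf_expands B₀).subset fun N hN => hN.2.2 B₀ hB₀
  obtain ⟨M, ⟨hM, hAM, hMΩ⟩, hmax⟩ := hS.exists_maximalFor Finset.card S ⟨A, hA, .refl, hAΩ⟩
  refine ⟨M, hM, hAM, hMΩ, fun N hN hAN hNΩ => ?_⟩
  have hMR : Expands M (commonRefinement N M) :=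
    commonRefinement_comm M N ▸ expands_commonRefinement hM.nonoverlapping hN
  have hRS : commonRefinement N M ∈ S := ⟨hM.trans hMR, hAM.trans hMR, fun B hB =>
    expands_commonRefinement_of_expands hN hM (hA.trans (hAΩ B hB)) (hNΩ B hB) (hMΩ B hB)⟩
  obtain hMeq | hlt := hMR.eq_or_card_lt hM.nonoverlapping
  · exact hMeq ▸ expands_commonRefinement hN.nonoverlapping hM
  · exact absurd (hmax hRS hlt.le) hlt.not_ge

/-- the greatest lower bound `glb_A(Ω)` exists. -/
theorem exists_isGlbAbove (s : ℕ) (hs : 1 ≤ s)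
    (A : Finset (Box s)) (hA : Admissible A)
    (Ω : Set (Finset (Box s))) (hfin : Ω.Finite) (hne : Ω.Nonempty)
    (hadm : ∀ B ∈ Ω, Admissible B) (hAΩ : ∀ B ∈ Ω, Expands A B) :
    ∃ M : Finset (Box s), IsGlbAbove A Ω M :=
  exists_isGlbAbove_general s A hA Ω hne hAΩ

end BrinThompson
end

section
/- Let Y be an admissible partition of C^s and let Y₀ ≠ Y₁ be simple contractions of Y of colours a and b respectively, which are not disjoint, and suppose there is an admissible partition A with A ≤ Y₀ and A ≤ Y₁. Label 1, 2 the two boxes of Y merged in Y₀ and 2, 3 the two boxes of Y merged in Y₁ (box 2 being common). Then the boxes 1 and 3 are distinct and a ≠ b. -/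
/-! The boxes merged by a simple contraction of colour `i` are the two halves of one box in
direction `i`, and the contraction is determined by `Y` and that box. If `a = b`, the common box 2
is a half of both merged boxes, so these coincide and `Y₀ = Y₁`. Hence `a ≠ b`; then boxes 1 and 2
have the same `b`-th word, while the distinct halves 2 and 3 differ in their `b`-th word. -/

namespace BrinThompson

variable {s : ℕ}

@[simp]
lemma expandBox_apply_self (i : Fin s) (t : Bool) (b : Box s) :
    expandBox i t b i = b i ++ [t] := by
  simp [expandBox]

@[simp]
lemma expandBox_apply_of_ne {i j : Fin s} (h : j ≠ i) (t : Bool) (b : Box s) :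
    expandBox i t b j = b j := by
  simp [expandBox, Function.update_of_ne h]

lemma expandBox_inj {i : Fin s} {t u : Bool} {b c : Box s} :
    expandBox i t b = expandBox i u c ↔ t = u ∧ b = c := by
  refine ⟨fun h => ?_, fun ⟨htu, hbc⟩ => htu ▸ hbc ▸ rfl⟩
  obtain ⟨hbc, htu⟩ : b i = c i ∧ t = u := by simpa using congrFun h i
  refine ⟨htu, funext fun j => ?_⟩
  by_cases hj : j = i
  · exact hj ▸ hbc
  · simpa [hj] using congrFun h j

def halves (i : Fin s) (b : Box s) : Finset (Box s) :=
  {expandBox i false b, expandBox i true b}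

lemma mem_halves {i : Fin s} {b x : Box s} : x ∈ halves i b ↔ ∃ t, x = expandBox i t b := by
  simp [halves]

lemma eq_of_mem_halves {i : Fin s} {b c x : Box s} (hb : x ∈ halves i b)
    (hc : x ∈ halves i c) : b = c := by
  obtain ⟨t, rfl⟩ := mem_halves.1 hb
  obtain ⟨u, hu⟩ := mem_halves.1 hc
  exact (expandBox_inj.1 hu).2

lemma apply_eq_of_mem_halves {i j : Fin s} {b x y : Box s} (hx : x ∈ halves i b)
    (hy : y ∈ halves i b) (hj : j ≠ i) : x j = y j := by
  obtain ⟨t, rfl⟩ := mem_halves.1 hx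
  obtain ⟨u, rfl⟩ := mem_halves.1 hy
  simp [hj]

lemma apply_ne_of_mem_halves {i : Fin s} {b x y : Box s} (hx : x ∈ halves i b)
    (hy : y ∈ halves i b) (hxy : x ≠ y) : x i ≠ y i := by
  obtain ⟨t, rfl⟩ := mem_halves.1 hx
  obtain ⟨u, rfl⟩ := mem_halves.1 hy
  have htu : t ≠ u := fun h => hxy (h ▸ rfl)
  simpa using htu

lemma SimpleExpansionC.exists_eq_halves {i : Fin s} {Z Y : Finset (Box s)}
    (hc : SimpleExpansionC i Z Y) {x y : Box s} (hxy : x ≠ y) (hm : Y \ Z = {x, y}) :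
    ∃ b, Z = insert b (Y \ {x, y}) ∧ {x, y} = halves i b := by
  obtain ⟨b, hb, rfl⟩ := hc
  have hsub : {x, y} ⊆ halves i b := by
    rw [← hm]
    intro z hz
    simp only [Finset.mem_sdiff, Finset.mem_insert, Finset.mem_erase] at hz
    rcases hz with ⟨hz | hz | ⟨-, hz⟩, hzZ⟩
    · simp [halves, hz]
    · simp [halves, hz]
    · exact absurd hz hzZ
  refine ⟨b, ?_, Finset.eq_of_subset_of_card_le hsub ?_⟩
  · rw [← hm, sdiff_sdiff_right_self, Finset.inf_eq_inter]
    ext z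
    by_cases hzb : z = b
    · simp [hzb, hb]
    · simp +contextual [hzb]
  · rw [Finset.card_pair hxy]
    exact Finset.card_le_two

theorem distinct_colours_of_overlapping_contractions_general (s : ℕ)
    (Y : Finset (Box s))
    (a b : Fin s) (Y0 Y1 : Finset (Box s))
    (hc0 : SimpleExpansionC a Y0 Y) (hc1 : SimpleExpansionC b Y1 Y)
    (hne : Y0 ≠ Y1)
    (x1 x2 x3 : Box s) (h12 : x1 ≠ x2) (h23 : x2 ≠ x3)
    (hm0 : Y \ Y0 = {x1, x2}) (hm1 : Y \ Y1 = {x2, x3}) :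
    x1 ≠ x3 ∧ a ≠ b := by
  obtain ⟨B0, hY0, hB0⟩ := hc0.exists_eq_halves h12 hm0
  obtain ⟨B1, hY1, hB1⟩ := hc1.exists_eq_halves h23 hm1
  have hx1 : x1 ∈ halves a B0 := hB0 ▸ by simp
  have hx2a : x2 ∈ halves a B0 := hB0 ▸ by simp
  have hx2b : x2 ∈ halves b B1 := hB1 ▸ by simp
  have hx3 : x3 ∈ halves b B1 := hB1 ▸ by simp
  have hab : a ≠ b := by
    rintro rfl
    obtain rfl := eq_of_mem_halves hx2a hx2b
    exact hne (by rw [hY0, hY1, hB0, hB1])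
  refine ⟨fun h13 => ?_, hab⟩
  have hx12 : x1 b = x2 b := apply_eq_of_mem_halves hx1 hx2a hab.symm
  exact apply_ne_of_mem_halves hx2b hx3 h23 (by rw [← hx12, h13])

/-- two different, non-disjoint simple contractions of `Y` lying above a common
admissible `A` have different colours, and the two non-common merged boxes are distinct. -/
theorem distinct_colours_of_overlapping_contractions (s : ℕ) (hs : 1 ≤ s)
    (Y : Finset (Box s)) (hY : Admissible Y)
    (a b : Fin s) (Y0 Y1 : Finset (Box s))
    (hY0 : Admissible Y0) (hY1 : Admissible Y1)
    (hc0 : SimpleExpansionC a Y0 Y) (hc1 : SimpleExpansionC b Y1 Y)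
    (hne : Y0 ≠ Y1) (hnd : ((Y \ Y0) ∩ (Y \ Y1)).Nonempty)
    (A : Finset (Box s)) (hA : Admissible A)
    (hA0 : Expands A Y0) (hA1 : Expands A Y1)
    (x1 x2 x3 : Box s) (h12 : x1 ≠ x2) (h23 : x2 ≠ x3)
    (hm0 : Y \ Y0 = {x1, x2}) (hm1 : Y \ Y1 = {x2, x3}) :
    x1 ≠ x3 ∧ a ≠ b :=
  distinct_colours_of_overlapping_contractions_general s Y a b Y0 Y1 hc0 hc1 hne x1 x2 x3 h12 h23
    hm0 hm1

end BrinThompson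
end
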